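/- A finite nonempty sequence l = (l_1, ..., l_n) of positive integers with Kraft sum Σ 2^{-l_k} = 1 is the left-to-right path-length sequence of some topological binary tree if and only if for every full segment S = [i,j] of l, the number 2^{m(S)} · K(S) is an integer. -/

import Mathlib

/-- Minimum of the values `l i, ..., l j`. -/
def segMin (l : ℕ → ℕ) (i j : ℕ) : ℕ :=
  (Finset.Icc i j).fold min (l i) l

/-- Neighborhood maximin parameter `m[i,j]`: the maximum of `min(l h, ..., l k)` over
subintervals `[h,k]` of `[1,n]` properly containing `[i,j]`, with value `0` if there
are none (in particular for `[i,j] = [1,n]`). -/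
def nmaxim (l : ℕ → ℕ) (n i j : ℕ) : ℕ :=
  (((Finset.Icc 1 i) ×ˢ (Finset.Icc j n)).filter (fun p => p ≠ (i, j))).fold max 0
    (fun p => segMin l p.1 p.2)

/-- `[i,j]` is a full segment (island) of the sequence `l` restricted to `[1,n]`. -/
def IsFullSeg (l : ℕ → ℕ) (n i j : ℕ) : Prop :=
  1 ≤ i ∧ i ≤ j ∧ j ≤ n ∧ nmaxim l n i j < segMin l i j

/-- Partial Kraft sum `K[i,j] = 2^{-l_i} + ... + 2^{-l_j}`. -/
noncomputable def kraft (l : ℕ → ℕ) (i j : ℕ) : ℝ :=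
  ∑ k ∈ Finset.Icc i j, ((2:ℝ) ^ (l k))⁻¹

/-- A topological binary tree: every internal node has exactly a left and a right son. -/
inductive BTree : Type
  | leaf : BTree
  | node : BTree → BTree → BTree

/-- The left-to-right (topologically ordered) path-length sequence: depths of leaves. -/
def BTree.depths : BTree → List ℕ
  | .leaf => [0]
  | .node L R => (L.depths.map (· + 1)) ++ (R.depths.map (· + 1))

/-- The codewords of the leaves in left-to-right order (`false` = 0 = left, `true` = 1 = right). -/
def BTree.codes : BTree → List (List Bool)
  | .leaf => [[]]
  | .node L R => (L.codes.map (List.cons false)) ++ (R.codes.map (List.cons true))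

/-!
Leaf `k` of a tree occupies the dyadic interval `[K_{<k}, K_{<k} + 2^{-l_k})` of `[0, 1)`, and a
sequence with Kraft sum `1` comes from a tree exactly when all these intervals are aligned,
`K_{<k} ∈ 2^{-l_k} ℤ`: aligned intervals cannot straddle `1/2`, so the leaves before and after `1/2`
form the two subtrees of the root.

Alignment is equivalent to the full-segment condition. A prefix sum ending at a cut of an aligned
sequence is dyadic at the depth of either neighbouring leaf, and `m(S)` is at least the depth of each
neighbour of a full segment `S`. Conversely, the maximal run of leaves deeper than a neighbour of a
cut is a full segment `S` with `m(S)` at most that depth, so the prefix sums are recovered by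
induction along the sequence.
-/

def IsDyadic (k : ℕ) (x : ℝ) : Prop := ∃ z : ℤ, (2 : ℝ) ^ k * x = z

namespace IsDyadic

variable {k k' : ℕ} {x y : ℝ}

theorem zero (k : ℕ) : IsDyadic k 0 := ⟨0, by simp⟩

theorem one (k : ℕ) : IsDyadic k 1 := ⟨2 ^ k, by simp⟩

theorem add (hx : IsDyadic k x) (hy : IsDyadic k y) : IsDyadic k (x + y) := by
  obtain ⟨a, ha⟩ := hx
  obtain ⟨b, hb⟩ := hy
  exact ⟨a + b, by push_cast; rw [mul_add, ha, hb]⟩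

theorem sub (hx : IsDyadic k x) (hy : IsDyadic k y) : IsDyadic k (x - y) := by
  obtain ⟨a, ha⟩ := hx
  obtain ⟨b, hb⟩ := hy
  exact ⟨a - b, by push_cast; rw [mul_sub, ha, hb]⟩

theorem mono (h : k ≤ k') (hx : IsDyadic k x) : IsDyadic k' x := by
  obtain ⟨a, ha⟩ := hx
  obtain ⟨j, rfl⟩ := Nat.exists_eq_add_of_le h
  exact ⟨2 ^ j * a, by push_cast; rw [pow_add, mul_comm (2 ^ k), mul_assoc, ha]⟩

theorem inv_two_pow (h : k ≤ k') : IsDyadic k' ((2 : ℝ) ^ k)⁻¹ :=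
  mono h ⟨1, by simp⟩

theorem add_one_iff : IsDyadic k (x + 1) ↔ IsDyadic k x :=
  ⟨fun h => by simpa using h.sub (one k), fun h => h.add (one k)⟩

theorem succ_iff : IsDyadic (k + 1) x ↔ IsDyadic k (2 * x) := by
  rw [IsDyadic, IsDyadic, pow_succ, mul_assoc]

theorem add_inv_two_pow_le (hx : IsDyadic k x) (hy : IsDyadic k y) (hxy : x < y) :
    x + ((2 : ℝ) ^ k)⁻¹ ≤ y := by
  obtain ⟨a, ha⟩ := hx
  obtain ⟨b, hb⟩ := hy
  have hk : (0 : ℝ) < 2 ^ k := by positivity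
  have hab : a + 1 ≤ b := by
    have : (a : ℝ) < b := by rw [← ha, ← hb]; exact mul_lt_mul_of_pos_left hxy hk
    exact_mod_cast this
  rw [← mul_le_mul_iff_right₀ hk, mul_add, mul_inv_cancel₀ hk.ne', ha, hb]
  exact_mod_cast hab

end IsDyadic

noncomputable def kraftSum (d : List ℕ) : ℝ := (d.map fun k => ((2 : ℝ) ^ k)⁻¹).sum

@[simp] theorem kraftSum_nil : kraftSum [] = 0 := rfl

@[simp] theorem kraftSum_cons (x : ℕ) (d : List ℕ) :
    kraftSum (x :: d) = ((2 : ℝ) ^ x)⁻¹ + kraftSum d := by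
  simp [kraftSum]

@[simp] theorem kraftSum_append (a b : List ℕ) : kraftSum (a ++ b) = kraftSum a + kraftSum b := by
  simp [kraftSum]

theorem kraftSum_map_succ (d : List ℕ) : kraftSum (d.map (· + 1)) = kraftSum d / 2 := by
  induction d with
  | nil => simp
  | cons x d ih => simp only [List.map_cons, kraftSum_cons, ih, pow_succ]; ring

theorem kraftSum_nonneg (d : List ℕ) : 0 ≤ kraftSum d := by
  induction d with
  | nil => simp
  | cons x d ih => rw [kraftSum_cons]; positivity

theorem kraftSum_pos {d : List ℕ} (h : d ≠ []) : 0 < kraftSum d := by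
  obtain ⟨x, d, rfl⟩ := List.exists_cons_of_ne_nil h
  rw [kraftSum_cons]
  have := kraftSum_nonneg d
  positivity

theorem eq_singleton_zero_of_kraftSum_eq_one {d : List ℕ} (hd : kraftSum d = 1) (h0 : 0 ∈ d) :
    d = [0] := by
  obtain ⟨a, b, rfl⟩ := List.append_of_mem h0
  have ha := kraftSum_nonneg a
  have hb := kraftSum_nonneg b
  simp only [kraftSum_append, kraftSum_cons, pow_zero, inv_one] at hd
  have ha0 : a = [] := by
    by_contra h
    linarith [kraftSum_pos h]
  have hb0 : b = [] := by
    by_contra h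
    linarith [kraftSum_pos h]
  simp [ha0, hb0]

/-- The leaves of `d`, laid out from `s` as consecutive intervals of lengths `2^{-x}`, each start at
a multiple of their length. -/
def IsDyadicAligned : ℝ → List ℕ → Prop
  | _, [] => True
  | s, x :: d => IsDyadic x s ∧ IsDyadicAligned (s + ((2 : ℝ) ^ x)⁻¹) d

@[simp] theorem isDyadicAligned_nil (s : ℝ) : IsDyadicAligned s [] := trivial

@[simp] theorem isDyadicAligned_cons (s : ℝ) (x : ℕ) (d : List ℕ) :
    IsDyadicAligned s (x :: d) ↔ IsDyadic x s ∧ IsDyadicAligned (s + ((2 : ℝ) ^ x)⁻¹) d :=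
  Iff.rfl

theorem isDyadicAligned_append (s : ℝ) (a b : List ℕ) :
    IsDyadicAligned s (a ++ b) ↔ IsDyadicAligned s a ∧ IsDyadicAligned (s + kraftSum a) b := by
  induction a generalizing s with
  | nil => simp
  | cons x a ih => simp [ih, add_assoc, and_assoc]

theorem isDyadicAligned_map_succ (s : ℝ) (d : List ℕ) :
    IsDyadicAligned s (d.map (· + 1)) ↔ IsDyadicAligned (2 * s) d := by
  induction d generalizing s with
  | nil => simp
  | cons x d ih =>
    have hshift : 2 * (s + ((2 : ℝ) ^ (x + 1))⁻¹) = 2 * s + ((2 : ℝ) ^ x)⁻¹ := by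
      rw [pow_succ]; field_simp
    rw [List.map_cons, isDyadicAligned_cons, isDyadicAligned_cons, ih, IsDyadic.succ_iff, hshift]

theorem isDyadicAligned_add_one (s : ℝ) (d : List ℕ) :
    IsDyadicAligned (s + 1) d ↔ IsDyadicAligned s d := by
  induction d generalizing s with
  | nil => simp
  | cons x d ih =>
    rw [isDyadicAligned_cons, isDyadicAligned_cons, IsDyadic.add_one_iff, add_right_comm, ih]

theorem IsDyadicAligned.exists_append_eq {s c : ℝ} {d : List ℕ} (hd : IsDyadicAligned s d)
    (hc : ∀ x ∈ d, IsDyadic x c) (hsc : s ≤ c) (hcd : c ≤ s + kraftSum d) :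
    ∃ a b, d = a ++ b ∧ s + kraftSum a = c := by
  induction d generalizing s with
  | nil => exact ⟨[], [], rfl, by simp at hcd ⊢; linarith⟩
  | cons x d ih =>
    rcases hsc.eq_or_lt with rfl | hlt
    · exact ⟨[], x :: d, rfl, by simp⟩
    have hstep := hd.1.add_inv_two_pow_le (hc x List.mem_cons_self) hlt
    obtain ⟨a, b, rfl, hab⟩ := ih hd.2 (fun y hy => hc y (List.mem_cons_of_mem x hy)) hstep
      (by rw [kraftSum_cons] at hcd; linarith)
    exact ⟨x :: a, b, rfl, by rw [kraftSum_cons, ← hab]; ring⟩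

theorem BTree.kraftSum_depths (t : BTree) : kraftSum t.depths = 1 := by
  induction t with
  | leaf => simp [BTree.depths]
  | node L R ihL ihR =>
    rw [BTree.depths, kraftSum_append, kraftSum_map_succ, kraftSum_map_succ, ihL, ihR]
    norm_num

theorem BTree.isDyadicAligned_depths (t : BTree) : IsDyadicAligned 0 t.depths := by
  induction t with
  | leaf => simpa [BTree.depths] using IsDyadic.zero 0
  | node L R ihL ihR =>
    have hR : IsDyadicAligned (2 * (0 + 1 / 2)) R.depths := by
      rwa [show (2 : ℝ) * (0 + 1 / 2) = 0 + 1 by norm_num, isDyadicAligned_add_one]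
    rw [BTree.depths, isDyadicAligned_append, isDyadicAligned_map_succ, isDyadicAligned_map_succ,
      kraftSum_map_succ, L.kraftSum_depths, mul_zero]
    exact ⟨ihL, hR⟩

theorem exists_depths_eq_of_isDyadicAligned (d : List ℕ) (hK : kraftSum d = 1)
    (hA : IsDyadicAligned 0 d) : ∃ t : BTree, t.depths = d := by
  by_cases h0 : 0 ∈ d
  · exact ⟨.leaf, (eq_singleton_zero_of_kraftSum_eq_one hK h0).symm⟩
  obtain ⟨e, rfl⟩ : ∃ e : List ℕ, e.map (· + 1) = d := by
    refine ⟨d.map (· - 1), ?_⟩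
    rw [List.map_map]
    conv_rhs => rw [← List.map_id d]
    exact List.map_congr_left fun x hx => Nat.sub_add_cancel
      (Nat.pos_of_ne_zero fun h => h0 (h ▸ hx))
  rw [kraftSum_map_succ] at hK
  rw [isDyadicAligned_map_succ, mul_zero] at hA
  -- the Kraft sum of `e` is twice that of `d`, so the root's split point `1/2` becomes `1`
  obtain ⟨a, b, rfl, ha⟩ := hA.exists_append_eq (c := 1) (fun x _ => IsDyadic.one x)
    zero_le_one (by linarith)
  rw [zero_add] at ha
  rw [isDyadicAligned_append, zero_add, ha] at hA
  have hAb : IsDyadicAligned 0 b := (isDyadicAligned_add_one 0 b).mp (by rw [zero_add]; exact hA.2)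
  have hb : kraftSum b = 1 := by rw [kraftSum_append] at hK; linarith
  have ha_lt : a.length < (a ++ b).length := by
    simp [List.length_pos_iff.mpr (show b ≠ [] by rintro rfl; simp at hb)]
  have hb_lt : b.length < (a ++ b).length := by
    simp [List.length_pos_iff.mpr (show a ≠ [] by rintro rfl; simp at ha)]
  obtain ⟨tL, htL⟩ := exists_depths_eq_of_isDyadicAligned a ha hA.1
  obtain ⟨tR, htR⟩ := exists_depths_eq_of_isDyadicAligned b hb hAb
  exact ⟨.node tL tR, by rw [BTree.depths, htL, htR, List.map_append]⟩
termination_by d.length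
decreasing_by
  all_goals subst_vars; rwa [List.length_map]

theorem exists_depths_eq_iff (d : List ℕ) :
    (∃ t : BTree, t.depths = d) ↔ kraftSum d = 1 ∧ IsDyadicAligned 0 d :=
  ⟨by rintro ⟨t, rfl⟩; exact ⟨t.kraftSum_depths, t.isDyadicAligned_depths⟩,
    fun h => exists_depths_eq_of_isDyadicAligned d h.1 h.2⟩

theorem kraft_one_zero (l : ℕ → ℕ) : kraft l 1 0 = 0 := by simp [kraft]

theorem kraft_one_succ (l : ℕ → ℕ) (p : ℕ) :
    kraft l 1 (p + 1) = kraft l 1 p + ((2 : ℝ) ^ l (p + 1))⁻¹ :=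
  Finset.sum_Icc_succ_top (Nat.le_add_left 1 p) _

theorem kraft_one_eq_add (l : ℕ → ℕ) {i j : ℕ} (h : i ≤ j) :
    kraft l 1 j = kraft l 1 i + kraft l (i + 1) j := by
  have := Finset.sum_Ioc_consecutive (fun k => ((2 : ℝ) ^ l k)⁻¹) (Nat.zero_le i) h
  have hIcc (m : ℕ) : Finset.Icc 1 m = Finset.Ioc 0 m := Finset.Icc_add_one_left_eq_Ioc 0 m
  simpa only [kraft, hIcc, Finset.Icc_add_one_left_eq_Ioc] using this.symm

theorem kraftSum_map_range (l : ℕ → ℕ) (n : ℕ) :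
    kraftSum ((List.range n).map fun k => l (k + 1)) = kraft l 1 n := by
  induction n with
  | zero => simp [kraft_one_zero]
  | succ n ih => simp [List.range_succ, kraft_one_succ, ih]

theorem isDyadicAligned_map_range (l : ℕ → ℕ) (n : ℕ) :
    IsDyadicAligned 0 ((List.range n).map fun k => l (k + 1)) ↔
      ∀ p < n, IsDyadic (l (p + 1)) (kraft l 1 p) := by
  induction n with
  | zero => simp
  | succ n ih =>
    rw [List.range_succ, List.map_append, isDyadicAligned_append, ih, kraftSum_map_range,
      zero_add, Nat.forall_lt_succ_right]
    simp

section Segments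

variable {l : ℕ → ℕ} {n i j c : ℕ}

theorem lt_segMin_iff (h : i ≤ j) : c < segMin l i j ↔ ∀ t ∈ Finset.Icc i j, c < l t := by
  rw [segMin, Finset.lt_fold_min]
  exact ⟨And.right, fun H => ⟨H i (Finset.mem_Icc.2 ⟨le_rfl, h⟩), H⟩⟩

theorem segMin_le_of_mem {t : ℕ} (ht : t ∈ Finset.Icc i j) (hc : l t ≤ c) : segMin l i j ≤ c :=
  (Finset.fold_min_le c).2 (Or.inr ⟨t, ht, hc⟩)

theorem nmaxim_le_iff : nmaxim l n i j ≤ c ↔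
    ∀ h k, 1 ≤ h → h ≤ i → j ≤ k → k ≤ n → (h, k) ≠ (i, j) → segMin l h k ≤ c := by
  simp [nmaxim, Finset.fold_max_le, and_imp]

theorem segMin_le_nmaxim {h k : ℕ} (h1 : 1 ≤ h) (hi : h ≤ i) (hj : j ≤ k) (hk : k ≤ n)
    (hne : (h, k) ≠ (i, j)) : segMin l h k ≤ nmaxim l n i j :=
  nmaxim_le_iff.1 le_rfl h k h1 hi hj hk hne

theorem IsFullSeg.left_le_nmaxim (hs : IsFullSeg l n (i + 1) j) :
    i = 0 ∨ l i ≤ nmaxim l n (i + 1) j := by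
  obtain ⟨-, hij, hjn, hlt⟩ := hs
  refine or_iff_not_imp_left.2 fun hi => not_lt.1 fun hgt => ?_
  have hle := segMin_le_nmaxim (l := l) (Nat.one_le_iff_ne_zero.2 hi) i.le_succ le_rfl hjn
    (by simp)
  refine hle.not_gt ((lt_segMin_iff (by omega)).2 fun t ht => ?_)
  rcases (Finset.mem_Icc.1 ht).1.eq_or_lt with rfl | hit
  · exact hgt
  · exact (lt_segMin_iff hij).1 hlt t (Finset.mem_Icc.2 ⟨hit, (Finset.mem_Icc.1 ht).2⟩)

theorem IsFullSeg.right_le_nmaxim (hs : IsFullSeg l n i j) :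
    j = n ∨ l (j + 1) ≤ nmaxim l n i j := by
  obtain ⟨hi, hij, hjn, hlt⟩ := hs
  refine or_iff_not_imp_left.2 fun hj => not_lt.1 fun hgt => ?_
  have hle := segMin_le_nmaxim (l := l) (n := n) hi le_rfl j.le_succ (by omega) (by simp)
  refine hle.not_gt ((lt_segMin_iff (by omega)).2 fun t ht => ?_)
  rcases (Finset.mem_Icc.1 ht).2.eq_or_lt with rfl | htj
  · exact hgt
  · exact (lt_segMin_iff hij).1 hlt t (Finset.mem_Icc.2 ⟨(Finset.mem_Icc.1 ht).1, by omega⟩)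

theorem nmaxim_le_of_boundary (hij : i < j) (hl : i = 0 ∨ l i ≤ c)
    (hr : j = n ∨ l (j + 1) ≤ c) : nmaxim l n (i + 1) j ≤ c := by
  refine nmaxim_le_iff.2 fun h k h1 hi hj hk hne => ?_
  rcases hi.lt_or_eq with hi | rfl
  · exact segMin_le_of_mem (t := i) (by simp; omega) (by omega)
  · have hjk : j < k := hj.lt_of_ne fun hjk => hne (by rw [hjk])
    exact segMin_le_of_mem (t := j + 1) (by simp; omega) (by omega)

end Segments

theorem exists_start_of_run_gt (l : ℕ → ℕ) (v : ℕ) :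
    ∀ p, v < l (p + 1) → ∃ i ≤ p, (i = 0 ∨ l i ≤ v) ∧ ∀ s ∈ Finset.Icc (i + 1) (p + 1), v < l s
  | 0, h => ⟨0, le_rfl, Or.inl rfl, fun s hs => by rwa [show s = 1 by simp at hs; omega]⟩
  | p + 1, h => by
    by_cases hp : l (p + 1) ≤ v
    · exact ⟨p + 1, le_rfl, Or.inr hp, fun s hs => by rwa [show s = p + 2 by simp at hs; omega]⟩
    obtain ⟨i, hip, hi, hrun⟩ := exists_start_of_run_gt l v p (not_le.1 hp)
    refine ⟨i, hip.trans p.le_succ, hi, fun s hs => ?_⟩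
    rcases (Finset.mem_Icc.1 hs).2.eq_or_lt with rfl | hsp
    · exact h
    · exact hrun s (Finset.mem_Icc.2 ⟨(Finset.mem_Icc.1 hs).1, by omega⟩)

section Aligned

variable {l : ℕ → ℕ} {n : ℕ}

theorem isDyadic_kraft_of_left_le (hal : ∀ p < n, IsDyadic (l (p + 1)) (kraft l 1 p)) {p v : ℕ} (hp : p ≤ n) (hv : p = 0 ∨ l p ≤ v) :
    IsDyadic v (kraft l 1 p) := by
  rcases p with _ | p
  · rw [kraft_one_zero]; exact .zero v
  rw [kraft_one_succ]
  exact ((hal p hp).add (.inv_two_pow le_rfl)).mono (by omega)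

theorem isDyadic_kraft_of_right_le (hal : ∀ p < n, IsDyadic (l (p + 1)) (kraft l 1 p))
    (hK : kraft l 1 n = 1) {p v : ℕ} (hp : p ≤ n)
    (hv : p = n ∨ l (p + 1) ≤ v) : IsDyadic v (kraft l 1 p) := by
  rcases hp.lt_or_eq with hp | rfl
  · exact (hal p hp).mono (by omega)
  · rw [hK]; exact .one v

theorem isDyadic_nmaxim_kraft_of_aligned (hal : ∀ p < n, IsDyadic (l (p + 1)) (kraft l 1 p))
    (hK : kraft l 1 n = 1) {i j : ℕ}
    (hs : IsFullSeg l n i j) : IsDyadic (nmaxim l n i j) (kraft l i j) := by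
  obtain ⟨i, rfl⟩ : ∃ i', i = i' + 1 := ⟨i - 1, by have := hs.1; omega⟩
  rw [show kraft l (i + 1) j = kraft l 1 j - kraft l 1 i by
    rw [kraft_one_eq_add l (show i ≤ j by have := hs.2.1; omega)]; ring]
  exact (isDyadic_kraft_of_right_le hal hK hs.2.2.1 hs.right_le_nmaxim).sub
    (isDyadic_kraft_of_left_le hal (by have := hs.2.2.1; have := hs.2.1; omega) hs.left_le_nmaxim)

end Aligned

theorem isDyadic_kraft_of_isFullSeg {l : ℕ → ℕ} {n : ℕ}
    (hfull : ∀ i j, IsFullSeg l n i j → IsDyadic (nmaxim l n i j) (kraft l i j)) :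
    ∀ p ≤ n, ∀ v, (p = 0 ∨ l p ≤ v) ∨ l (p + 1) ≤ v → IsDyadic v (kraft l 1 p) := by
  intro p
  induction p using Nat.strong_induction_on with | _ p ih => ?_
  intro hpn v hv
  rcases p with _ | p
  · rw [kraft_one_zero]; exact .zero v
  by_cases hle : l (p + 1) ≤ v
  · rw [kraft_one_succ]
    exact (ih p (by omega) (by omega) v (Or.inr hle)).add (.inv_two_pow hle)
  -- the maximal run of leaves deeper than `v` ending at leaf `p + 1` is a full segment
  obtain ⟨i, hip, hl, hrun⟩ := exists_start_of_run_gt l v p (by omega)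
  have hm : nmaxim l n (i + 1) (p + 1) ≤ v :=
    nmaxim_le_of_boundary (by omega) hl (Or.inr (by omega))
  have hseg : IsFullSeg l n (i + 1) (p + 1) :=
    ⟨by omega, by omega, hpn, hm.trans_lt ((lt_segMin_iff (by omega)).2 hrun)⟩
  rw [kraft_one_eq_add l (show i ≤ p + 1 by omega)]
  exact (ih i (by omega) (by omega) v (Or.inl hl)).add ((hfull _ _ hseg).mono hm)

theorem path_length_sequence_characterization_general (l : ℕ → ℕ) (n : ℕ)
    (hkraft : kraft l 1 n = 1) :
    (∃ t : BTree, t.depths = (List.range n).map (fun k => l (k + 1))) ↔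
      (∀ i j : ℕ, IsFullSeg l n i j →
        ∃ z : ℤ, (2:ℝ) ^ (nmaxim l n i j) * kraft l i j = z) := by
  rw [exists_depths_eq_iff, kraftSum_map_range, isDyadicAligned_map_range]
  constructor
  · rintro ⟨-, hal⟩ i j hs
    exact isDyadic_nmaxim_kraft_of_aligned hal hkraft hs
  · intro hfull
    exact ⟨hkraft, fun p hp => isDyadic_kraft_of_isFullSeg hfull p hp.le _ (Or.inr le_rfl)⟩

/-- Characterization: a finite nonempty sequence of positive integers with Kraft sum 1
is the path-length sequence of a topological binary tree iff for every full segment `S`,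
`2^{m(S)} · K(S)` is an integer. -/
theorem path_length_sequence_characterization (l : ℕ → ℕ) (n : ℕ) (hn : 1 ≤ n)
    (hpos : ∀ k ∈ Finset.Icc 1 n, 0 < l k)
    (hkraft : kraft l 1 n = 1) :
    (∃ t : BTree, t.depths = (List.range n).map (fun k => l (k + 1))) ↔
      (∀ i j : ℕ, IsFullSeg l n i j →
        ∃ z : ℤ, (2:ℝ) ^ (nmaxim l n i j) * kraft l i j = z) :=
  path_length_sequence_characterization_general l n hkraft
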